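/- Let N ≥ 2, fix an index i, let ξ ∈ ℝ^d, and let x_i* ∈ ℝ^d be a fixed point of f (f(x_i*) = x_i*). Set δ = max{‖ξ − x_i‖, ‖x_i* − x_i‖}. Then for every point ξ' on the line segment joining ξ and x_i*, the spectral norm of the Jacobian satisfies ‖Df(ξ')‖₂ ≤ 2 β N M² (N − 1) · exp(−β (Δ_i − 2 δ M)). -/

import Mathlib

/-!
Write `p = softmax (β Xᵀ ξ')` and `m = Σ_k p_k x_k = f(ξ')`. Differentiating the softmax gives
`Df(ξ') h = β Σ_j p_j ⟪x_j - m, h⟫ x_j`, so `‖Df(ξ')‖ ≤ β M Σ_j p_j ‖x_j - m‖`. Every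
`‖x_j - m‖` is at most `2M`, and `‖x_i - m‖ ≤ 2M (1 - p_i)`, hence `‖Df(ξ')‖ ≤ 4 β M² (1 - p_i)`.
On the segment `‖ξ' - x_i‖ ≤ δ` by convexity of the ball, and for `j ≠ i`
`⟪x_j, ξ'⟫ - ⟪x_i, ξ'⟫ = ⟪x_j - x_i, ξ' - x_i⟫ - (⟪x_i, x_i⟫ - ⟪x_i, x_j⟫) ≤ 2δM - Δ_i`,
so each `p_j ≤ exp (-β (Δ_i - 2δM))` and `1 - p_i ≤ (N - 1) exp (-β (Δ_i - 2δM))`.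
-/

open scoped BigOperators RealInnerProductSpace

/-- softmax(v)_j = exp(v_j) / Σ_k exp(v_k). -/
noncomputable def softmax {N : ℕ} (v : Fin N → ℝ) : Fin N → ℝ :=
  fun j => Real.exp (v j) / ∑ k, Real.exp (v k)

/-- The Hopfield update rule f(ξ) = X softmax(β Xᵀ ξ) = Σ_i softmax(β ⟪x_i, ξ⟫)_i • x_i. -/
noncomputable def hopfieldUpdate {d N : ℕ} (x : Fin N → EuclideanSpace ℝ (Fin d))
    (β : ℝ) (ξ : EuclideanSpace ℝ (Fin d)) : EuclideanSpace ℝ (Fin d) :=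
  ∑ i, softmax (fun j => β * ⟪x j, ξ⟫) i • x i

open Finset

section Softmax

variable {N : ℕ} (v : Fin N → ℝ)

theorem softmax_nonneg (j : Fin N) : 0 ≤ softmax v j := by
  unfold softmax; positivity

theorem sum_exp_pos (i : Fin N) : 0 < ∑ k, Real.exp (v k) :=
  sum_pos (fun k _ => Real.exp_pos (v k)) ⟨i, mem_univ i⟩

theorem sum_softmax [Nonempty (Fin N)] : ∑ j, softmax v j = 1 := by
  simp only [softmax, ← sum_div, div_self (sum_exp_pos v ‹Nonempty (Fin N)›.some).ne']

theorem softmax_le_one (i : Fin N) : softmax v i ≤ 1 :=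
  div_le_one_of_le₀ (single_le_sum (fun k _ => (Real.exp_pos (v k)).le) (mem_univ i))
    (sum_exp_pos v i).le

theorem softmax_le_exp_sub (i j : Fin N) : softmax v j ≤ Real.exp (v j - v i) := by
  have h : softmax v j = softmax v i * Real.exp (v j - v i) := by
    simp only [softmax, div_mul_eq_mul_div, ← Real.exp_add, add_sub_cancel]
  rw [h]
  exact mul_le_of_le_one_left (Real.exp_pos _).le (softmax_le_one v i)

theorem one_sub_softmax_le (i : Fin N) {ε : ℝ} (h : ∀ j ≠ i, softmax v j ≤ ε) :
    1 - softmax v i ≤ (N - 1) * ε := by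
  have : Nonempty (Fin N) := ⟨i⟩
  calc 1 - softmax v i = ∑ j ∈ univ.erase i, softmax v j := by
        rw [← sum_softmax v, ← add_sum_erase _ _ (mem_univ i), add_sub_cancel_left]
    _ ≤ (univ.erase i).card • ε :=
        sum_le_card_nsmul _ _ _ fun j hj => h j (ne_of_mem_erase hj)
    _ = (N - 1) * ε := by
        rw [card_erase_of_mem (mem_univ i), card_univ, Fintype.card_fin, nsmul_eq_mul,
          Nat.cast_pred i.pos]

end Softmax

section Jacobian

variable {d N : ℕ} (x : Fin N → EuclideanSpace ℝ (Fin d)) (β : ℝ)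

noncomputable def hopfieldJacobian (ξ : EuclideanSpace ℝ (Fin d)) :
    EuclideanSpace ℝ (Fin d) →L[ℝ] EuclideanSpace ℝ (Fin d) :=
  ∑ j, ((β * softmax (fun k => β * ⟪x k, ξ⟫) j) •
    innerSL ℝ (x j - hopfieldUpdate x β ξ)).smulRight (x j)

theorem hopfieldJacobian_apply (ξ h : EuclideanSpace ℝ (Fin d)) :
    hopfieldJacobian x β ξ h =
      ∑ j, (β * softmax (fun k => β * ⟪x k, ξ⟫) j * ⟪x j - hopfieldUpdate x β ξ, h⟫) • x j := by
  simp only [hopfieldJacobian, FunLike.coe_sum, Finset.sum_apply,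
    ContinuousLinearMap.smulRight_apply, FunLike.coe_smul, Pi.smul_apply,
    innerSL_apply_apply, smul_eq_mul]

theorem hasFDerivAt_softmax_inner (ξ : EuclideanSpace ℝ (Fin d)) (j : Fin N) :
    HasFDerivAt (fun ξ => softmax (fun k => β * ⟪x k, ξ⟫) j)
      ((β * softmax (fun k => β * ⟪x k, ξ⟫) j) • innerSL ℝ (x j - hopfieldUpdate x β ξ)) ξ := by
  have hexp : ∀ k, HasFDerivAt (fun ξ => Real.exp (β * ⟪x k, ξ⟫))
      (Real.exp (β * ⟪x k, ξ⟫) • β • innerSL ℝ (x k)) ξ :=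
    fun k => ((innerSL ℝ (x k)).hasFDerivAt.const_mul β).exp
  have hsum := HasFDerivAt.fun_sum fun k (_ : k ∈ univ) => hexp k
  have hS := sum_exp_pos (fun k => β * ⟪x k, ξ⟫) j
  have hquot := (hexp j).mul ((hasDerivAt_inv hS.ne').comp_hasFDerivAt ξ hsum)
  simp only [Function.comp_def] at hquot
  simp only [softmax, div_eq_mul_inv]
  refine hquot.congr_fderiv ?_
  ext h
  simp only [hopfieldUpdate, softmax, neg_smul, smul_neg, _root_.add_apply,
    _root_.neg_apply, _root_.smul_apply, _root_.sum_apply,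
    coe_innerSL_apply, smul_eq_mul, map_sub, map_sum, map_smul, _root_.sub_apply]
  simp only [div_mul_eq_mul_div, ← sum_div, mul_left_comm _ β, ← mul_sum]
  field_simp
  ring

theorem hasFDerivAt_hopfieldUpdate (ξ : EuclideanSpace ℝ (Fin d)) :
    HasFDerivAt (hopfieldUpdate x β) (hopfieldJacobian x β ξ) ξ :=
  HasFDerivAt.fun_sum fun j _ => (hasFDerivAt_softmax_inner x β ξ j).smul_const (x j)

end Jacobian

theorem norm_sub_le_two_mul {ι E : Type*} [SeminormedAddCommGroup E] {y : ι → E} {M : ℝ}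
    (hM : ∀ k, ‖y k‖ ≤ M) (j k : ι) : ‖y j - y k‖ ≤ 2 * M := by
  linarith [norm_sub_le (y j) (y k), hM j, hM k]

section WeightedMean

variable {ι E : Type*} [Fintype ι] [NormedAddCommGroup E] [NormedSpace ℝ E]
  {p : ι → ℝ} {y : ι → E}

theorem norm_sub_sum_smul_le (hp : ∀ k, 0 ≤ p k) (hp1 : ∑ k, p k = 1) (z : E) :
    ‖z - ∑ k, p k • y k‖ ≤ ∑ k, p k * ‖z - y k‖ := by
  calc ‖z - ∑ k, p k • y k‖ = ‖∑ k, p k • (z - y k)‖ := by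
        simp only [smul_sub, sum_sub_distrib, ← sum_smul, hp1, one_smul]
    _ ≤ ∑ k, p k * ‖z - y k‖ := by
        refine (norm_sum_le _ _).trans_eq (sum_congr rfl fun k _ => ?_)
        rw [norm_smul, Real.norm_of_nonneg (hp k)]

theorem sum_mul_norm_sub_weightedMean_le [DecidableEq ι] (hp : ∀ k, 0 ≤ p k) (hp1 : ∑ k, p k = 1)
    {M : ℝ} (hM : ∀ k, ‖y k‖ ≤ M) (i : ι) :
    ∑ j, p j * ‖y j - ∑ k, p k • y k‖ ≤ 4 * M * (1 - p i) := by
  set c := ∑ k, p k • y k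
  have hrest : ∑ j ∈ univ.erase i, p j = 1 - p i := by
    rw [← hp1, ← add_sum_erase _ _ (mem_univ i), add_sub_cancel_left]
  have hfar : ∀ j, ‖y j - c‖ ≤ 2 * M := fun j =>
    calc ‖y j - c‖ ≤ ∑ k, p k * (2 * M) :=
          (norm_sub_sum_smul_le hp hp1 _).trans
            (sum_le_sum fun k _ => mul_le_mul_of_nonneg_left (norm_sub_le_two_mul hM j k) (hp k))
      _ = 2 * M := by rw [← sum_mul, hp1, one_mul]
  have hnear : ‖y i - c‖ ≤ 2 * M * (1 - p i) :=
    calc ‖y i - c‖ ≤ ∑ k, p k * ‖y i - y k‖ := norm_sub_sum_smul_le hp hp1 _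
      _ = ∑ k ∈ univ.erase i, p k * ‖y i - y k‖ := by
          rw [← add_sum_erase _ _ (mem_univ i), sub_self, norm_zero, mul_zero, zero_add]
      _ ≤ ∑ k ∈ univ.erase i, p k * (2 * M) :=
          sum_le_sum fun k _ => mul_le_mul_of_nonneg_left (norm_sub_le_two_mul hM i k) (hp k)
      _ = 2 * M * (1 - p i) := by rw [← sum_mul, hrest, mul_comm]
  calc ∑ j, p j * ‖y j - c‖ = p i * ‖y i - c‖ + ∑ j ∈ univ.erase i, p j * ‖y j - c‖ :=
        (add_sum_erase _ _ (mem_univ i)).symm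
    _ ≤ 1 * (2 * M * (1 - p i)) + ∑ j ∈ univ.erase i, p j * (2 * M) := by
        gcongr with j
        · linarith [single_le_sum (fun k _ => hp k) (mem_univ i), hp1]
        · exact hp j
        · exact hfar j
    _ = 4 * M * (1 - p i) := by rw [← sum_mul, hrest]; ring

end WeightedMean

theorem inner_sub_inner_le {F : Type*} [NormedAddCommGroup F] [InnerProductSpace ℝ F]
    {a b z : F} {M δ Δ : ℝ} (ha : ‖a‖ ≤ M) (hb : ‖b‖ ≤ M) (hz : ‖z - a‖ ≤ δ)
    (hΔ : Δ ≤ ⟪a, a⟫ - ⟪a, b⟫) :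
    ⟪b, z⟫ - ⟪a, z⟫ ≤ 2 * δ * M - Δ := by
  have hsplit : ⟪b, z⟫ - ⟪a, z⟫ = ⟪b - a, z - a⟫ - (⟪a, a⟫ - ⟪a, b⟫) := by
    simp only [inner_sub_left, inner_sub_right, real_inner_comm a b]
    ring
  have hcross : ⟪b - a, z - a⟫ ≤ 2 * δ * M :=
    calc ⟪b - a, z - a⟫ ≤ ‖b - a‖ * ‖z - a‖ := real_inner_le_norm _ _
      _ ≤ 2 * M * δ :=
          mul_le_mul (by linarith [norm_sub_le b a]) hz (norm_nonneg _) (by linarith [norm_nonneg a])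
      _ = 2 * δ * M := by ring
  linarith

theorem norm_hopfieldJacobian_le {d N : ℕ} {x : Fin N → EuclideanSpace ℝ (Fin d)} {β M : ℝ}
    (hβ : 0 ≤ β) (hM : ∀ k, ‖x k‖ ≤ M) (ξ : EuclideanSpace ℝ (Fin d)) (i : Fin N) :
    ‖hopfieldJacobian x β ξ‖ ≤ 4 * β * M ^ 2 * (1 - softmax (fun k => β * ⟪x k, ξ⟫) i) := by
  set p := softmax (fun k => β * ⟪x k, ξ⟫)
  have : Nonempty (Fin N) := ⟨i⟩
  have hspread : ∑ j, p j * ‖x j - hopfieldUpdate x β ξ‖ ≤ 4 * M * (1 - p i) :=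
    sum_mul_norm_sub_weightedMean_le (softmax_nonneg _) (sum_softmax _) hM i
  have hM0 : 0 ≤ M := (norm_nonneg _).trans (hM i)
  have hpi : 0 ≤ 1 - p i := sub_nonneg.2 (softmax_le_one _ i)
  refine ContinuousLinearMap.opNorm_le_bound _ (by positivity) fun h => ?_
  rw [hopfieldJacobian_apply]
  calc ‖∑ j, (β * p j * ⟪x j - hopfieldUpdate x β ξ, h⟫) • x j‖
      ≤ ∑ j, β * M * ‖h‖ * (p j * ‖x j - hopfieldUpdate x β ξ‖) := by
        refine (norm_sum_le _ _).trans (sum_le_sum fun j _ => ?_)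
        have hβp : 0 ≤ β * p j := mul_nonneg hβ (softmax_nonneg _ j)
        rw [norm_smul, Real.norm_eq_abs, abs_mul, abs_of_nonneg hβp]
        calc β * p j * |⟪x j - hopfieldUpdate x β ξ, h⟫| * ‖x j‖
            ≤ β * p j * (‖x j - hopfieldUpdate x β ξ‖ * ‖h‖) * M := by
              gcongr
              · exact abs_real_inner_le_norm _ _
              · exact hM j
          _ = β * M * ‖h‖ * (p j * ‖x j - hopfieldUpdate x β ξ‖) := by ring
    _ = β * M * ‖h‖ * ∑ j, p j * ‖x j - hopfieldUpdate x β ξ‖ := (mul_sum _ _ _).symm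
    _ ≤ β * M * ‖h‖ * (4 * M * (1 - p i)) := by gcongr
    _ = 4 * β * M ^ 2 * (1 - p i) * ‖h‖ := by ring

theorem jacobian_spectral_norm_bound_segment_general
    {d N : ℕ} (hN : 2 ≤ N) (x : Fin N → EuclideanSpace ℝ (Fin d)) (β M Δ : ℝ)
    (hβ : 0 < β)
    (hM : IsGreatest (Set.range fun i => ‖x i‖) M)
    (i : Fin N)
    (hΔ : IsLeast {v : ℝ | ∃ j, j ≠ i ∧ v = ⟪x i, x i⟫ - ⟪x i, x j⟫} Δ)
    (ξ xstar : EuclideanSpace ℝ (Fin d)) :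
    ∀ ξ' ∈ segment ℝ ξ xstar,
      ‖fderiv ℝ (hopfieldUpdate x β) ξ'‖
        ≤ 2 * β * N * M ^ 2 * ((N : ℝ) - 1) *
            Real.exp (-β * (Δ - 2 * max ‖ξ - x i‖ ‖xstar - x i‖ * M)) := by
  intro ξ' hξ'
  set δ := max ‖ξ - x i‖ ‖xstar - x i‖
  set ε := Real.exp (-β * (Δ - 2 * δ * M))
  have hxM : ∀ k, ‖x k‖ ≤ M := fun k => hM.2 ⟨k, rfl⟩
  have hnear : ‖ξ' - x i‖ ≤ δ := by
    have hball := (convex_closedBall (x i) δ).segment_subset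
      (mem_closedBall_iff_norm.2 (le_max_left _ _)) (mem_closedBall_iff_norm.2 (le_max_right _ _))
    exact mem_closedBall_iff_norm.1 (hball hξ')
  have hsmall : ∀ j ≠ i, softmax (fun k => β * ⟪x k, ξ'⟫) j ≤ ε := fun j hj =>
    (softmax_le_exp_sub _ i j).trans <| Real.exp_le_exp.2 <| by
      have := inner_sub_inner_le (hxM i) (hxM j) hnear (hΔ.2 ⟨j, hj, rfl⟩)
      nlinarith
  have hN' : (2 : ℝ) ≤ N := by exact_mod_cast hN
  have hε : 0 ≤ β * M ^ 2 * ((N : ℝ) - 1) * ε := by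
    have := Real.exp_pos (-β * (Δ - 2 * δ * M))
    have : (0 : ℝ) ≤ N - 1 := by linarith
    positivity
  rw [(hasFDerivAt_hopfieldUpdate x β ξ').fderiv]
  calc _ ≤ 4 * β * M ^ 2 * (1 - softmax (fun k => β * ⟪x k, ξ'⟫) i) :=
        norm_hopfieldJacobian_le hβ.le hxM ξ' i
    _ ≤ 4 * β * M ^ 2 * ((N - 1) * ε) := by gcongr; exact one_sub_softmax_le _ i hsmall
    _ ≤ 2 * β * N * M ^ 2 * ((N : ℝ) - 1) * ε := by nlinarith

/-- For N ≥ 2, index i, ξ, and a fixed point x_i* of f, with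
δ = max{‖ξ − x_i‖, ‖x_i* − x_i‖}, for every ξ' on the segment joining ξ and x_i* the
spectral norm of the Jacobian satisfies
‖Df(ξ')‖₂ ≤ 2 β N M² (N − 1) · exp(−β (Δ_i − 2 δ M)). -/
theorem jacobian_spectral_norm_bound_segment
    {d N : ℕ} (hN : 2 ≤ N) (x : Fin N → EuclideanSpace ℝ (Fin d)) (β M Δ : ℝ)
    (hβ : 0 < β)
    (hM : IsGreatest (Set.range fun i => ‖x i‖) M)
    (i : Fin N)
    (hΔ : IsLeast {v : ℝ | ∃ j, j ≠ i ∧ v = ⟪x i, x i⟫ - ⟪x i, x j⟫} Δ)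
    (ξ xstar : EuclideanSpace ℝ (Fin d))
    (hfix : hopfieldUpdate x β xstar = xstar) :
    ∀ ξ' ∈ segment ℝ ξ xstar,
      ‖fderiv ℝ (hopfieldUpdate x β) ξ'‖
        ≤ 2 * β * N * M ^ 2 * ((N : ℝ) - 1) *
            Real.exp (-β * (Δ - 2 * max ‖ξ - x i‖ ‖xstar - x i‖ * M)) :=
  jacobian_spectral_norm_bound_segment_general hN x β M Δ hβ hM i hΔ ξ xstar
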